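/- Let 0 ≤ d_x < 1/2, 0 ≤ d_ε < 1/2 and let k̃_0 ≥ 2 be an integer with k̃_0(2d_ε−1) > −1. Let M = M(n) be a sequence of positive integers with M → ∞, M ≤ n and M^{max(3, k̃_0−2)}/n → 0 as n → ∞. Then n^{−1} Σ_{p=−M}^{M} Σ_{q=−M}^{M} Σ_{r=−n+1}^{n−1} [ (|p|+1)^{d_x+d_ε−1}(|q|+1)^{d_x+d_ε−1} + (|r−p|+1)^{d_x+d_ε−1}(|r+q|+1)^{d_x+d_ε−1} ] (|r+q−p|+1)^{(k̃_0−1)(2d_ε−1)} = o(M^{2d_x + k̃_0(2d_ε−1) + 1}) as n → ∞. -/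

import Mathlib

/-!
With `α = d_x + d_ε - 1` and `β = (k̃₀ - 1)(2d_ε - 1)`, both in `(-1, 0)`, every inner sum is a
window sum: over `2N + 1` consecutive integers, `∑ (|s + c| + 1)^γ ≤ 6/(1+γ) · N^(1+γ)` whatever
the shift `c`. The first diagram factorises and is `O(M^(2+2α) n^(1+β))`. In the second one the
factor `(|r + q| + 1)^α` is simply bounded by `1`; summing over `q`, `r`, `p` then gives
`O(M · n^(1+α) M^(1+β))`. After normalisation the two terms are `O((M/n)^(-β))` and
`O((M²/n)^(-α))`, and both tend to `0` because `M³/n → 0`.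
-/

open Filter Finset Real

theorem sub_one_rpow_add_mul_rpow_le {γ : ℝ} (hγ1 : -1 ≤ γ) (hγ0 : γ ≤ 0) {x : ℝ} (hx : 1 ≤ x) :
    (x - 1) ^ (1 + γ) + (1 + γ) * x ^ γ ≤ x ^ (1 + γ) := by
  have hx0 : 0 < x := by linarith
  have hbern := rpow_one_add_le_one_add_mul_self (s := -x⁻¹) (p := 1 + γ)
    (by linarith [inv_le_one_of_one_le₀ hx]) (by linarith) (by linarith)
  have hsplit : x - 1 = x * (1 + -x⁻¹) := by field_simp; ring
  calc (x - 1) ^ (1 + γ) + (1 + γ) * x ^ γ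
      = x ^ (1 + γ) * (1 + -x⁻¹) ^ (1 + γ) + (1 + γ) * x ^ γ := by
        rw [hsplit, mul_rpow hx0.le (by linarith [inv_le_one_of_one_le₀ hx])]
    _ ≤ x ^ (1 + γ) * (1 + (1 + γ) * -x⁻¹) + (1 + γ) * x ^ γ := by gcongr
    _ = x ^ (1 + γ) := by
        rw [rpow_add hx0, rpow_one]; field_simp; ring

theorem sum_range_add_one_rpow_le {γ : ℝ} (hγ1 : -1 < γ) (hγ0 : γ ≤ 0) (N : ℕ) :
    ∑ m ∈ range N, ((m : ℝ) + 1) ^ γ ≤ (N : ℝ) ^ (1 + γ) / (1 + γ) := by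
  have hp : 0 < 1 + γ := by linarith
  induction N with
  | zero => simp [zero_rpow hp.ne']
  | succ N ih =>
    have hstep := sub_one_rpow_add_mul_rpow_le hγ1.le hγ0 (x := N + 1) (by simp)
    rw [add_sub_cancel_right] at hstep
    rw [sum_range_succ, Nat.cast_succ, le_div_iff₀ hp]
    rw [le_div_iff₀ hp] at ih
    linarith

theorem sum_Icc_natAbs_le_sum_range {f : ℕ → ℝ} (hf : Antitone f) {a : ℤ} (ha : 0 ≤ a) (b : ℤ) :
    ∑ s ∈ Icc a b, f s.natAbs ≤ ∑ m ∈ range (b + 1 - a).toNat, f m :=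
  calc ∑ s ∈ Icc a b, f s.natAbs
      ≤ ∑ s ∈ Icc a b, f (s - a).toNat :=
        sum_le_sum fun s hs => hf (by rw [mem_Icc] at hs; omega)
    _ = ∑ m ∈ range (b + 1 - a).toNat, f m := by
        refine sum_nbij' (fun s => (s - a).toNat) (fun m => a + m) ?_ ?_ ?_ ?_ fun _ _ => rfl <;>
          intro x hx <;> simp only [mem_Icc, mem_range] at hx ⊢ <;> omega

theorem sum_Icc_natAbs_neg {R : Type*} [AddCommMonoid R] (f : ℕ → R) (a b : ℤ) :
    ∑ s ∈ Icc a b, f s.natAbs = ∑ s ∈ Icc (-b) (-a), f s.natAbs := by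
  refine sum_nbij' (fun s => -s) (fun s => -s) ?_ ?_ (fun s _ => neg_neg s) (fun s _ => neg_neg s)
    (fun s _ => by rw [Int.natAbs_neg]) <;>
    intro x hx <;> simp only [mem_Icc] at hx ⊢ <;> omega

theorem sum_Icc_natAbs_le_two_mul_sum_range {f : ℕ → ℝ} (hf : Antitone f) (hf0 : ∀ m, 0 ≤ f m)
    (a b : ℤ) : ∑ s ∈ Icc a b, f s.natAbs ≤ 2 * ∑ m ∈ range (b + 1 - a).toNat, f m := by
  have hmono : ∀ {N : ℕ}, N ≤ (b + 1 - a).toNat →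
      ∑ m ∈ range N, f m ≤ ∑ m ∈ range (b + 1 - a).toNat, f m := fun hN =>
    sum_le_sum_of_subset_of_nonneg (range_subset_range.mpr hN) fun m _ _ => hf0 m
  have hneg : ∑ s ∈ Icc a (min b (-1)), f s.natAbs ≤ ∑ m ∈ range (b + 1 - a).toNat, f m := by
    rw [sum_Icc_natAbs_neg]
    exact (sum_Icc_natAbs_le_sum_range hf (by omega) _).trans (hmono (by omega))
  have hpos : ∑ s ∈ Icc (max a 0) b, f s.natAbs ≤ ∑ m ∈ range (b + 1 - a).toNat, f m :=
    (sum_Icc_natAbs_le_sum_range hf (le_max_right a 0) b).trans (hmono (by omega))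
  have hunion : Icc a b = Icc a (min b (-1)) ∪ Icc (max a 0) b := by
    ext s; simp only [mem_union, mem_Icc]; omega
  have hdisj : Disjoint (Icc a (min b (-1))) (Icc (max a 0) b) := by
    rw [disjoint_left]; intro s hs hs'; rw [mem_Icc] at hs hs'; omega
  rw [hunion, sum_union hdisj]
  linarith

noncomputable def decayWeight (γ x : ℝ) : ℝ := (|x| + 1) ^ γ

section decayWeight

variable {γ : ℝ}

theorem decayWeight_nonneg (γ x : ℝ) : 0 ≤ decayWeight γ x := by
  unfold decayWeight; positivity

theorem decayWeight_le_one (hγ : γ ≤ 0) (x : ℝ) : decayWeight γ x ≤ 1 :=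
  rpow_le_one_of_one_le_of_nonpos (by linarith [abs_nonneg x]) hγ

theorem decayWeight_intCast (γ : ℝ) (z : ℤ) : decayWeight γ z = ((z.natAbs : ℝ) + 1) ^ γ := by
  rw [Nat.cast_natAbs, Int.cast_abs, decayWeight]

theorem two_mul_add_one_rpow_le (hγ1 : -1 < γ) (hγ0 : γ ≤ 0) {N : ℝ} (hN : 1 ≤ N) :
    (2 * N + 1) ^ (1 + γ) ≤ 3 * N ^ (1 + γ) :=
  calc (2 * N + 1) ^ (1 + γ) ≤ (3 * N) ^ (1 + γ) := by gcongr <;> linarith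
    _ = 3 ^ (1 + γ) * N ^ (1 + γ) := mul_rpow (by norm_num) (by linarith)
    _ ≤ 3 * N ^ (1 + γ) := by
        gcongr
        exact rpow_le_self_of_one_le (by norm_num) (by linarith)

theorem sum_Icc_decayWeight_add_le (hγ1 : -1 < γ) (hγ0 : γ ≤ 0) {N : ℕ} (hN : 1 ≤ N) (c : ℤ) :
    ∑ s ∈ Icc (-(N : ℤ)) N, decayWeight γ (s + c) ≤ 6 / (1 + γ) * (N : ℝ) ^ (1 + γ) := by
  have hp : 0 < 1 + γ := by linarith
  have hanti : Antitone fun m : ℕ => ((m : ℝ) + 1) ^ γ := fun i j hij =>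
    rpow_le_rpow_of_nonpos (by positivity) (by gcongr) hγ0
  have hshift : ∑ s ∈ Icc (-(N : ℤ)) N, decayWeight γ (s + c)
      = ∑ s ∈ Icc (-(N : ℤ) + c) (N + c), ((s.natAbs : ℝ) + 1) ^ γ := by
    rw [← map_add_right_Icc, sum_map]
    simp only [addRightEmbedding_apply, ← decayWeight_intCast, Int.cast_add]
  have hlen : ((N : ℤ) + c + 1 - (-(N : ℤ) + c)).toNat = 2 * N + 1 := by omega
  calc ∑ s ∈ Icc (-(N : ℤ)) N, decayWeight γ (s + c)
      ≤ 2 * ∑ m ∈ range (2 * N + 1), ((m : ℝ) + 1) ^ γ := by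
        rw [hshift, ← hlen]
        exact sum_Icc_natAbs_le_two_mul_sum_range hanti (fun m => by positivity) _ _
    _ ≤ 2 * ((2 * (N : ℝ) + 1) ^ (1 + γ) / (1 + γ)) := by
        gcongr
        exact_mod_cast sum_range_add_one_rpow_le hγ1 hγ0 (2 * N + 1)
    _ ≤ 2 * (3 * (N : ℝ) ^ (1 + γ) / (1 + γ)) := by
        gcongr
        exact two_mul_add_one_rpow_le hγ1 hγ0 (by exact_mod_cast hN)
    _ = 6 / (1 + γ) * (N : ℝ) ^ (1 + γ) := by ring

theorem sum_decayWeight_add_le_of_subset (hγ1 : -1 < γ) (hγ0 : γ ≤ 0) {N : ℕ} (hN : 1 ≤ N)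
    {I : Finset ℤ} (hI : I ⊆ Icc (-(N : ℤ)) N) (c : ℤ) :
    ∑ s ∈ I, decayWeight γ (s + c) ≤ 6 / (1 + γ) * (N : ℝ) ^ (1 + γ) :=
  (sum_le_sum_of_subset_of_nonneg hI fun _ _ _ => decayWeight_nonneg _ _).trans
    (sum_Icc_decayWeight_add_le hγ1 hγ0 hN c)

theorem sum_Icc_decayWeight_le (hγ1 : -1 < γ) (hγ0 : γ ≤ 0) {N : ℕ} (hN : 1 ≤ N) :
    ∑ s ∈ Icc (-(N : ℤ)) N, decayWeight γ s ≤ 6 / (1 + γ) * (N : ℝ) ^ (1 + γ) := by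
  simpa using sum_Icc_decayWeight_add_le hγ1 hγ0 hN 0

end decayWeight

noncomputable def cumulantSum (α β : ℝ) (M n : ℕ) : ℝ :=
  ∑ p ∈ Icc (-(M : ℤ)) M, ∑ q ∈ Icc (-(M : ℤ)) M, ∑ r ∈ Icc (-(n : ℤ) + 1) (n - 1),
    (decayWeight α p * decayWeight α q + decayWeight α (r - p) * decayWeight α (r + q)) *
      decayWeight β (r + q - p)

theorem cumulantSum_nonneg (α β : ℝ) (M n : ℕ) : 0 ≤ cumulantSum α β M n := by
  unfold cumulantSum decayWeight
  positivity

section cumulantSum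

variable {α β : ℝ}

theorem sum_weight_pq_le (hα1 : -1 < α) (hα0 : α ≤ 0) (hβ1 : -1 < β) (hβ0 : β ≤ 0)
    {M n : ℕ} (hM : 1 ≤ M) (hn : 1 ≤ n) :
    ∑ p ∈ Icc (-(M : ℤ)) M, ∑ q ∈ Icc (-(M : ℤ)) M, ∑ r ∈ Icc (-(n : ℤ) + 1) (n - 1),
        decayWeight α p * decayWeight α q * decayWeight β (r + q - p)
      ≤ (6 / (1 + α) * (M : ℝ) ^ (1 + α)) ^ 2 * (6 / (1 + β) * (n : ℝ) ^ (1 + β)) := by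
  have hr : ∀ p q : ℤ, ∑ r ∈ Icc (-(n : ℤ) + 1) (n - 1), decayWeight β (r + q - p)
      ≤ 6 / (1 + β) * (n : ℝ) ^ (1 + β) := fun p q => by
    simpa only [Int.cast_sub, add_sub_assoc] using sum_decayWeight_add_le_of_subset hβ1 hβ0 hn
      (Icc_subset_Icc (by omega) (by omega)) (q - p)
  calc _ ≤ ∑ p ∈ Icc (-(M : ℤ)) M, ∑ q ∈ Icc (-(M : ℤ)) M,
          decayWeight α p * decayWeight α q * (6 / (1 + β) * (n : ℝ) ^ (1 + β)) := by
        refine sum_le_sum fun p _ => sum_le_sum fun q _ => ?_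
        rw [← mul_sum]
        exact mul_le_mul_of_nonneg_left (hr p q)
          (mul_nonneg (decayWeight_nonneg _ _) (decayWeight_nonneg _ _))
    _ = (∑ p ∈ Icc (-(M : ℤ)) M, decayWeight α p) ^ 2 * (6 / (1 + β) * (n : ℝ) ^ (1 + β)) := by
        rw [sq, sum_mul_sum, sum_mul]
        simp only [sum_mul]
    _ ≤ _ := by
        have hβpos : 0 < 1 + β := by linarith
        gcongr
        · exact sum_nonneg fun p _ => decayWeight_nonneg _ _
        · exact sum_Icc_decayWeight_le hα1 hα0 hM

-- Bounding `(|r + q| + 1)^α` by `1` loses a factor `M^(-α)`, affordable since `M²/n → 0`.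
theorem sum_weight_rp_rq_le (hα1 : -1 < α) (hα0 : α ≤ 0) (hβ1 : -1 < β) (hβ0 : β ≤ 0)
    {M n : ℕ} (hM : 1 ≤ M) (hn : 1 ≤ n) :
    ∑ p ∈ Icc (-(M : ℤ)) M, ∑ q ∈ Icc (-(M : ℤ)) M, ∑ r ∈ Icc (-(n : ℤ) + 1) (n - 1),
        decayWeight α (r - p) * decayWeight α (r + q) * decayWeight β (r + q - p)
      ≤ 3 * M * (6 / (1 + α) * (n : ℝ) ^ (1 + α)) * (6 / (1 + β) * (M : ℝ) ^ (1 + β)) := by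
  have hq : ∀ p r : ℤ, ∑ q ∈ Icc (-(M : ℤ)) M, decayWeight β (r + q - p)
      ≤ 6 / (1 + β) * (M : ℝ) ^ (1 + β) := fun p r => by
    convert sum_Icc_decayWeight_add_le hβ1 hβ0 hM (r - p) using 3
    push_cast; ring
  have hr : ∀ p : ℤ, ∑ r ∈ Icc (-(n : ℤ) + 1) (n - 1), decayWeight α (r - p)
      ≤ 6 / (1 + α) * (n : ℝ) ^ (1 + α) := fun p => by
    simpa only [Int.cast_neg, ← sub_eq_add_neg] using sum_decayWeight_add_le_of_subset hα1 hα0 hn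
      (Icc_subset_Icc (by omega) (by omega)) (-p)
  calc _ ≤ ∑ p ∈ Icc (-(M : ℤ)) M, ∑ r ∈ Icc (-(n : ℤ) + 1) (n - 1),
          decayWeight α (r - p) * ∑ q ∈ Icc (-(M : ℤ)) M, decayWeight β (r + q - p) := by
        refine sum_le_sum fun p _ => ?_
        rw [sum_comm]
        refine sum_le_sum fun r _ => ?_
        rw [mul_sum]
        refine sum_le_sum fun q _ => ?_
        gcongr ?_ * _
        · exact decayWeight_nonneg _ _
        · exact mul_le_of_le_one_right (decayWeight_nonneg _ _) (decayWeight_le_one hα0 _)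
    _ ≤ ∑ p ∈ Icc (-(M : ℤ)) M, ∑ r ∈ Icc (-(n : ℤ) + 1) (n - 1),
          decayWeight α (r - p) * (6 / (1 + β) * (M : ℝ) ^ (1 + β)) := by
        refine sum_le_sum fun p _ => sum_le_sum fun r _ => ?_
        exact mul_le_mul_of_nonneg_left (hq p r) (decayWeight_nonneg _ _)
    _ ≤ ∑ p ∈ Icc (-(M : ℤ)) M,
          6 / (1 + α) * (n : ℝ) ^ (1 + α) * (6 / (1 + β) * (M : ℝ) ^ (1 + β)) := by
        refine sum_le_sum fun p _ => ?_
        rw [← sum_mul]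
        have hβpos : 0 < 1 + β := by linarith
        gcongr
        exact hr p
    _ ≤ _ := by
        rw [sum_const, Int.card_Icc, nsmul_eq_mul, mul_assoc (3 * (M : ℝ))]
        have hαpos : 0 < 1 + α := by linarith
        have hβpos : 0 < 1 + β := by linarith
        gcongr
        have hcard : (M + 1 - -(M : ℤ)).toNat = 2 * M + 1 := by omega
        rw [hcard]; push_cast
        linarith [(Nat.one_le_cast (α := ℝ)).mpr hM]

theorem cumulantSum_le (hα1 : -1 < α) (hα0 : α ≤ 0) (hβ1 : -1 < β) (hβ0 : β ≤ 0)
    {M n : ℕ} (hM : 1 ≤ M) (hn : 1 ≤ n) :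
    cumulantSum α β M n ≤ (6 / (1 + α) * (M : ℝ) ^ (1 + α)) ^ 2 * (6 / (1 + β) * (n : ℝ) ^ (1 + β))
      + 3 * M * (6 / (1 + α) * (n : ℝ) ^ (1 + α)) * (6 / (1 + β) * (M : ℝ) ^ (1 + β)) := by
  simp only [cumulantSum, add_mul, sum_add_distrib]
  exact add_le_add (sum_weight_pq_le hα1 hα0 hβ1 hβ0 hM hn)
    (sum_weight_rp_rq_le hα1 hα0 hβ1 hβ0 hM hn)

theorem cumulantSum_normalized_le (hα1 : -1 < α) (hα0 : α ≤ 0) (hβ1 : -1 < β) (hβ0 : β ≤ 0)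
    {M n : ℕ} (hM : 1 ≤ M) (hn : 1 ≤ n) :
    (M : ℝ) ^ (-(2 + 2 * α + β)) * ((n : ℝ)⁻¹ * cumulantSum α β M n)
      ≤ (6 / (1 + α)) ^ 2 * (6 / (1 + β)) * ((M : ℝ) / n) ^ (-β)
        + 108 / ((1 + α) * (1 + β)) * ((M : ℝ) ^ 2 / n) ^ (-α) := by
  have hm : (0 : ℝ) < M := by exact_mod_cast hM
  have hx : (0 : ℝ) < n := by exact_mod_cast hn
  have hαpos : 0 < 1 + α := by linarith
  have hβpos : 0 < 1 + β := by linarith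
  have hmα := rpow_pos_of_pos hm α
  have hmβ := rpow_pos_of_pos hm β
  have hxα := rpow_pos_of_pos hx α
  have hxβ := rpow_pos_of_pos hx β
  have hsucc : ∀ {y : ℝ}, 0 < y → ∀ γ : ℝ, y ^ (1 + γ) = y * y ^ γ := fun hy γ => by
    rw [rpow_add hy, rpow_one]
  have hnorm : (M : ℝ) ^ (-(2 + 2 * α + β))
      = ((M : ℝ) * M * (M : ℝ) ^ α * (M : ℝ) ^ α * (M : ℝ) ^ β)⁻¹ := by
    rw [rpow_neg hm.le, show 2 + 2 * α + β = (1 + α) + (1 + α) + β by ring, rpow_add hm,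
      rpow_add hm, hsucc hm]
    ring
  have hratio1 : ((M : ℝ) / n) ^ (-β) = (n : ℝ) ^ β / (M : ℝ) ^ β := by
    rw [rpow_neg (by positivity), div_rpow hm.le hx.le, inv_div]
  have hratio2 : ((M : ℝ) ^ 2 / n) ^ (-α) = (n : ℝ) ^ α / ((M : ℝ) ^ α) ^ 2 := by
    rw [rpow_neg (by positivity), div_rpow (by positivity) hx.le, inv_div, sq, sq,
      mul_rpow hm.le hm.le]
  calc (M : ℝ) ^ (-(2 + 2 * α + β)) * ((n : ℝ)⁻¹ * cumulantSum α β M n)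
      ≤ (M : ℝ) ^ (-(2 + 2 * α + β)) * ((n : ℝ)⁻¹ *
          ((6 / (1 + α) * (M : ℝ) ^ (1 + α)) ^ 2 * (6 / (1 + β) * (n : ℝ) ^ (1 + β))
            + 3 * M * (6 / (1 + α) * (n : ℝ) ^ (1 + α)) * (6 / (1 + β) * (M : ℝ) ^ (1 + β)))) := by
        gcongr
        exact cumulantSum_le hα1 hα0 hβ1 hβ0 hM hn
    _ = _ := by
        rw [hnorm, hratio1, hratio2, hsucc hm, hsucc hm, hsucc hx, hsucc hx]
        field_simp
        ring

end cumulantSum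

theorem tendsto_natCast_pow_div_of_le {M : ℕ → ℕ} {j k : ℕ} (hj : j ≠ 0) (hjk : j ≤ k)
    (h : Tendsto (fun n : ℕ => (M n : ℝ) ^ k / n) atTop (nhds 0)) :
    Tendsto (fun n : ℕ => (M n : ℝ) ^ j / n) atTop (nhds 0) := by
  refine squeeze_zero (fun n => by positivity)
    (fun n => div_le_div_of_nonneg_right ?_ n.cast_nonneg) h
  rcases (M n).eq_zero_or_pos with h0 | hpos
  · simp [h0, zero_pow hj, zero_pow (by omega : k ≠ 0)]
  · exact pow_le_pow_right₀ (by exact_mod_cast hpos) hjk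

theorem tendsto_rpow_const_nhds_zero {f : ℕ → ℝ} (hf : Tendsto f atTop (nhds 0)) {c : ℝ}
    (hc : 0 < c) : Tendsto (fun n => f n ^ c) atTop (nhds 0) := by
  simpa [zero_rpow hc.ne'] using hf.rpow_const (Or.inr hc.le)

theorem partI_cumulant_bound_general (dx dε : ℝ)
    (hdx0 : 0 ≤ dx) (hdx : dx < 1 / 2) (hdε : dε < 1 / 2)
    (ktil0 : ℕ) (hktil0 : 2 ≤ ktil0) (hlm : (-1 : ℝ) < (ktil0 : ℝ) * (2 * dε - 1))
    (M : ℕ → ℕ)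
    (hMn : Tendsto (fun n : ℕ => (M n : ℝ) ^ (max 3 (ktil0 - 2)) / (n : ℝ))
      atTop (nhds 0)) :
    Tendsto (fun n : ℕ =>
        (M n : ℝ) ^ (-(2 * dx + (ktil0 : ℝ) * (2 * dε - 1) + 1)) *
          ((n : ℝ)⁻¹ *
            ∑ p ∈ Finset.Icc (-(M n : ℤ)) (M n : ℤ),
              ∑ q ∈ Finset.Icc (-(M n : ℤ)) (M n : ℤ),
                ∑ r ∈ Finset.Icc (-(n : ℤ) + 1) ((n : ℤ) - 1),
                  (((|p| : ℝ) + 1) ^ (dx + dε - 1) * ((|q| : ℝ) + 1) ^ (dx + dε - 1) +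
                      ((|r - p| : ℝ) + 1) ^ (dx + dε - 1) *
                        ((|r + q| : ℝ) + 1) ^ (dx + dε - 1)) *
                    ((|r + q - p| : ℝ) + 1) ^ (((ktil0 : ℝ) - 1) * (2 * dε - 1))))
      atTop (nhds 0) := by
  set α := dx + dε - 1
  set β := ((ktil0 : ℝ) - 1) * (2 * dε - 1)
  have hk : (2 : ℝ) ≤ ktil0 := by exact_mod_cast hktil0
  have hα1 : -1 < α := by nlinarith
  have hα0 : α < 0 := by linarith
  have hβ1 : -1 < β := by nlinarith
  have hβ0 : β < 0 := by nlinarith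
  have hαpos : 0 < 1 + α := by linarith
  have hβpos : 0 < 1 + β := by linarith
  have hexp : 2 * dx + (ktil0 : ℝ) * (2 * dε - 1) + 1 = 2 + 2 * α + β := by ring
  change Tendsto (fun n : ℕ => (M n : ℝ) ^ (-(2 * dx + (ktil0 : ℝ) * (2 * dε - 1) + 1)) *
    ((n : ℝ)⁻¹ * cumulantSum α β (M n) n)) atTop (nhds 0)
  have hM1 := tendsto_natCast_pow_div_of_le one_ne_zero (by omega) hMn
  have hM2 := tendsto_natCast_pow_div_of_le two_ne_zero (by omega) hMn
  simp only [pow_one] at hM1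
  have hbound := ((tendsto_rpow_const_nhds_zero hM1 (neg_pos.mpr hβ0)).const_mul
    ((6 / (1 + α)) ^ 2 * (6 / (1 + β)))).add
    ((tendsto_rpow_const_nhds_zero hM2 (neg_pos.mpr hα0)).const_mul (108 / ((1 + α) * (1 + β))))
  rw [mul_zero, mul_zero, add_zero] at hbound
  refine squeeze_zero' (Eventually.of_forall fun n => ?_) ?_ hbound
  · have := cumulantSum_nonneg α β (M n) n
    positivity
  · filter_upwards [eventually_ge_atTop 1] with n hn
    rcases (M n).eq_zero_or_pos with h0 | hpos
    · rw [h0, Nat.cast_zero, zero_rpow (by linarith), zero_mul]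
      positivity
    · rw [hexp]
      exact cumulantSum_normalized_le hα1 hα0.le hβ1 hβ0.le hpos hn

/-- the fourth-cumulant bound of Part I of the proof of Lemma 1
(case `a = 1`, residual Hermite rank `k̃₀ ≥ 2` with `k̃₀(2d_ε-1) > -1`):
under `M → ∞`, `M ≤ n`, `M^{max(3,k̃₀-2)}/n → 0`,
the cumulant sum is `o(M^{2d_x + k̃₀(2d_ε-1) + 1})`. -/
theorem partI_cumulant_bound (dx dε : ℝ)
    (hdx0 : 0 ≤ dx) (hdx : dx < 1 / 2) (hdε0 : 0 ≤ dε) (hdε : dε < 1 / 2)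
    (ktil0 : ℕ) (hktil0 : 2 ≤ ktil0) (hlm : (-1 : ℝ) < (ktil0 : ℝ) * (2 * dε - 1))
    (M : ℕ → ℕ) (hMpos : ∀ n, 0 < M n) (hM : Tendsto M atTop atTop)
    (hMle : ∀ n : ℕ, 0 < n → M n ≤ n)
    (hMn : Tendsto (fun n : ℕ => (M n : ℝ) ^ (max 3 (ktil0 - 2)) / (n : ℝ))
      atTop (nhds 0)) :
    Tendsto (fun n : ℕ =>
        (M n : ℝ) ^ (-(2 * dx + (ktil0 : ℝ) * (2 * dε - 1) + 1)) *
          ((n : ℝ)⁻¹ *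
            ∑ p ∈ Finset.Icc (-(M n : ℤ)) (M n : ℤ),
              ∑ q ∈ Finset.Icc (-(M n : ℤ)) (M n : ℤ),
                ∑ r ∈ Finset.Icc (-(n : ℤ) + 1) ((n : ℤ) - 1),
                  (((|p| : ℝ) + 1) ^ (dx + dε - 1) * ((|q| : ℝ) + 1) ^ (dx + dε - 1) +
                      ((|r - p| : ℝ) + 1) ^ (dx + dε - 1) *
                        ((|r + q| : ℝ) + 1) ^ (dx + dε - 1)) *
                    ((|r + q - p| : ℝ) + 1) ^ (((ktil0 : ℝ) - 1) * (2 * dε - 1))))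
      atTop (nhds 0) :=
  partI_cumulant_bound_general dx dε hdx0 hdx hdε ktil0 hktil0 hlm M hMn
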